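/- arXiv:1801.00113 — 6 statements merged into one kernel-verified Lean document; each statement's English description precedes it below -/
import Mathlib

section
/- If m + n ≤ 4 (with m ≥ 2, n ≥ 1), then a group G is a T(m,n)-group if and only if G is abelian. -/
/-- `G` is a `T(m,n)`-group: for every `m` subsets of `G` of cardinality `n`,
there exist distinct indices `i ≠ j` and commuting elements `x ∈ Xᵢ`, `y ∈ Xⱼ`. -/
def IsTGroup (G : Type*) [Group G] (m n : ℕ) : Prop :=
  ∀ X : Fin m → Finset G, (∀ i, (X i).card = n) →
    ∃ i j, i ≠ j ∧ ∃ x ∈ X i, ∃ y ∈ X j, x * y = y * x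

/-!
Both directions reduce to a few small cases, because being a `T(m,n)`-group is inherited by
`T(m',n')` whenever `m ≤ m'` and `n ≤ n'` (drop sets, shrink sets), and `T(2,1)` just says that
the group is abelian. If `m + n ≤ 4`, then `T(m,n)` implies `T(2,2)` or `T(3,1)`. For
non-commuting `a, b`, the families `{a, b}, {ab, ba}` and `{a}, {b}, {ab}` violate these:
`x` commutes with `xy` or `yx` only if it commutes with `y`.
-/

open Finset

section

variable {G : Type*} [Group G]

theorem commute_mul_left_iff {a b : G} : Commute (a * b) a ↔ Commute a b :=
  (IsLeftRegular.all a).commute_mul_left_iff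

theorem commute_mul_right_iff {a b : G} : Commute (b * a) a ↔ Commute a b :=
  (IsRightRegular.all a).commute_mul_right_iff

theorem IsTGroup.mono {m n m' n' : ℕ} (h : IsTGroup G m n) (hm : m ≤ m') (hn : n ≤ n') :
    IsTGroup G m' n' := by
  intro X hX
  choose Y hYX hY using fun i ↦ exists_subset_card_eq ((hX i).symm ▸ hn : n ≤ (X i).card)
  obtain ⟨i, j, hij, x, hx, y, hy, hxy⟩ := h (fun i ↦ Y (Fin.castLE hm i)) fun i ↦ hY _
  exact ⟨_, _, (Fin.castLE_injective hm).ne hij, x, hYX _ hx, y, hYX _ hy, hxy⟩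

theorem isTGroup_two_iff {n : ℕ} : IsTGroup G 2 n ↔
    ∀ s t : Finset G, s.card = n → t.card = n → ∃ x ∈ s, ∃ y ∈ t, Commute x y := by
  constructor
  · intro h s t hs ht
    obtain ⟨i, j, hij, x, hx, y, hy, hxy⟩ := h ![s, t] (Fin.forall_fin_two.2 ⟨hs, ht⟩)
    fin_cases i <;> fin_cases j <;> simp only [ne_eq, not_true_eq_false] at hij
    · exact ⟨x, hx, y, hy, hxy⟩
    · exact ⟨y, hy, x, hx, hxy.symm⟩
  · intro h X hX
    obtain ⟨x, hx, y, hy, hxy⟩ := h (X 0) (X 1) (hX 0) (hX 1)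
    exact ⟨0, 1, zero_ne_one, x, hx, y, hy, hxy⟩

theorem isTGroup_two_one_iff : IsTGroup G 2 1 ↔ ∀ a b : G, Commute a b := by
  rw [isTGroup_two_iff]
  constructor
  · intro h a b
    simpa using h {a} {b} (card_singleton a) (card_singleton b)
  · intro h s t hs ht
    obtain ⟨x, rfl⟩ := card_eq_one.1 hs
    obtain ⟨y, rfl⟩ := card_eq_one.1 ht
    exact ⟨x, mem_singleton_self x, y, mem_singleton_self y, h x y⟩

theorem IsTGroup.commute_of_two_two (h : IsTGroup G 2 2) (a b : G) : Commute a b := by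
  classical
  by_contra hab
  have hne : a ≠ b := by
    rintro rfl
    exact hab (Commute.refl a)
  obtain ⟨x, hx, y, hy, hxy⟩ :=
    isTGroup_two_iff.1 h {a, b} {a * b, b * a} (card_pair hne) (card_pair hab)
  simp only [mem_insert, mem_singleton] at hx hy
  rcases hx with rfl | rfl <;> rcases hy with rfl | rfl
  · exact hab (commute_mul_left_iff.1 hxy.symm)
  · exact hab (commute_mul_right_iff.1 hxy.symm)
  · exact hab (commute_mul_right_iff.1 hxy.symm).symm
  · exact hab (commute_mul_left_iff.1 hxy.symm).symm

theorem IsTGroup.exists_commute_of_one {m : ℕ} (h : IsTGroup G m 1) (x : Fin m → G) :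
    ∃ i j, i ≠ j ∧ Commute (x i) (x j) := by
  obtain ⟨i, j, hij, y, hy, z, hz, hyz⟩ := h (fun i ↦ {x i}) fun i ↦ card_singleton _
  rw [mem_singleton] at hy hz
  exact ⟨i, j, hij, hy ▸ hz ▸ hyz⟩

theorem IsTGroup.commute_of_three_one (h : IsTGroup G 3 1) (a b : G) : Commute a b := by
  obtain ⟨i, j, hij, hxy⟩ := h.exists_commute_of_one ![a, b, a * b]
  fin_cases i <;> fin_cases j <;>
    simp only [Fin.zero_eta, Fin.mk_one, Fin.reduceFinMk, Fin.isValue, ne_eq, not_true_eq_false,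
      Matrix.cons_val_zero, Matrix.cons_val_one, Matrix.cons_val] at hij hxy
  · exact hxy
  · exact commute_mul_left_iff.1 hxy.symm
  · exact hxy.symm
  · exact (commute_mul_right_iff.1 hxy.symm).symm
  · exact commute_mul_left_iff.1 hxy
  · exact (commute_mul_right_iff.1 hxy).symm

end

theorem stmt_0 (G : Type*) [Group G] (m n : ℕ) (hm : 2 ≤ m) (hn : 1 ≤ n)
    (hmn : m + n ≤ 4) :
    IsTGroup G m n ↔ ∀ a b : G, a * b = b * a := by
  constructor
  · intro h a b
    rcases (by omega : m ≤ 2 ∧ n ≤ 2 ∨ m ≤ 3 ∧ n ≤ 1) with ⟨hm2, hn2⟩ | ⟨hm3, hn1⟩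
    · exact (h.mono hm2 hn2).commute_of_two_two a b
    · exact (h.mono hm3 hn1).commute_of_three_one a b
  · intro h
    exact (isTGroup_two_one_iff.2 h).mono hm hn
end

section
/- If G is a finite group not a T(m,n)-group with m·n = |G| − |Z(G)|, then every non-central element a of G satisfies |C_G(a)| ≤ n + |Z(G)|, and hence the order of a is at most n + |Z(G)|. -/
section

open Finset Function Subgroup

theorem Finset.biUnion_eq_of_pairwise_disjoint_of_card_le {ι α : Type*} [Fintype ι]
    [DecidableEq α] {X : ι → Finset α} {s : Finset α} {n : ℕ} (hdisj : Pairwise (Disjoint on X))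
    (hsub : ∀ i, X i ⊆ s) (hcard : ∀ i, #(X i) = n) (hs : #s ≤ Fintype.card ι * n) :
    univ.biUnion X = s :=
  eq_of_subset_of_card_le (biUnion_subset.2 fun i _ ↦ hsub i) <| by
    rwa [card_biUnion fun i _ j _ hij ↦ hdisj hij, sum_const_nat fun i _ ↦ hcard i, card_univ]

variable {G : Type*} [Group G]

theorem orderOf_le_card_centralizer [Finite G] (a : G) :
    orderOf a ≤ Nat.card (centralizer {a}) := by
  have ha : a ∈ centralizer {a} := mem_centralizer_singleton_iff.2 rfl
  simpa only [Subgroup.orderOf_mk] using _root_.orderOf_le_card (x := (⟨a, ha⟩ : centralizer {a}))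

theorem ncard_centralizer_diff_center [Finite G] (a : G) :
    ((centralizer {a} : Set G) \ center G).ncard =
      Nat.card (centralizer {a}) - Nat.card (center G) := by
  rw [Set.ncard_sdiff (center_le_centralizer _), ← SetLike.coe_sort_coe, ← SetLike.coe_sort_coe,
    Nat.card_coe_set_eq, Nat.card_coe_set_eq]

theorem ncard_compl_center [Finite G] :
    ((center G : Set G)ᶜ).ncard = Nat.card G - Nat.card (center G) := by
  rw [Set.ncard_compl, ← SetLike.coe_sort_coe, Nat.card_coe_set_eq]

theorem isTGroup_of_lt_card_centralizer [Finite G] {m n : ℕ}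
    (heq : m * n = Nat.card G - Nat.card (center G)) {a : G} (ha : a ∉ center G)
    (hlt : n + Nat.card (center G) < Nat.card (centralizer {a})) : IsTGroup G m n := by
  classical
  cases nonempty_fintype G
  intro X hX
  by_cases hZ : ∃ i, ∃ z ∈ X i, z ∈ center G
  · obtain ⟨i, z, hzi, hz⟩ := hZ
    -- `n < |C_G(a)| - |Z(G)| ≤ |G| - |Z(G)| = m * n`
    have hm : 1 < m := by
      have := card_le_card_group (centralizer {a})
      have := card_le_card_group (center G)
      exact Nat.lt_of_mul_lt_mul_right (a := n) (by omega)
    have := Fin.nontrivial_iff_two_le.2 hm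
    obtain ⟨j, hji⟩ := exists_ne i
    obtain ⟨y, hy⟩ : (X j).Nonempty := card_pos.1 (hX j ▸ hX i ▸ card_pos.2 ⟨z, hzi⟩)
    exact ⟨i, j, hji.symm, z, hzi, y, hy, (mem_center_iff.1 hz y).symm⟩
  by_cases hdisj : Pairwise (Disjoint on X)
  swap
  · simp only [Pairwise, onFun, not_forall, not_disjoint_iff] at hdisj
    obtain ⟨i, j, hij, x, hxi, hxj⟩ := hdisj
    exact ⟨i, j, hij, x, hxi, x, hxj, rfl⟩
  push Not at hZ
  have hcover : univ.biUnion X = (center G : Set G)ᶜ.toFinset :=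
    biUnion_eq_of_pairwise_disjoint_of_card_le hdisj
      (fun i x hx ↦ Set.mem_toFinset.2 (hZ i x hx)) hX
      (by rw [← Set.ncard_eq_toFinset_card', ncard_compl_center, Fintype.card_fin, heq])
  obtain ⟨i, -, hai⟩ := mem_biUnion.1 (hcover ▸ Set.mem_toFinset.2 ha)
  obtain ⟨y, hy, hyi⟩ : ∃ y ∈ ((centralizer {a} : Set G) \ center G).toFinset, y ∉ X i :=
    exists_mem_notMem_of_card_lt_card <| by
      rw [hX, ← Set.ncard_eq_toFinset_card', ncard_centralizer_diff_center]; omega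
  rw [Set.mem_toFinset] at hy
  obtain ⟨j, -, hyj⟩ := mem_biUnion.1 (hcover ▸ Set.mem_toFinset.2 hy.2)
  exact ⟨i, j, by rintro rfl; exact hyi hyj, a, hai, y, hyj,
    (mem_centralizer_singleton_iff.1 hy.1).symm⟩

end

theorem stmt_5_general (G : Type*) [Group G] [Finite G] (m n : ℕ)
    (h : ¬ IsTGroup G m n)
    (heq : m * n = Nat.card G - Nat.card (Subgroup.center G))
    (a : G) (ha : a ∉ Subgroup.center G) :
    Nat.card (Subgroup.centralizer {a}) ≤ n + Nat.card (Subgroup.center G) ∧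
      orderOf a ≤ n + Nat.card (Subgroup.center G) := by
  have hC : Nat.card (Subgroup.centralizer {a}) ≤ n + Nat.card (Subgroup.center G) :=
    not_lt.1 fun hlt ↦ h (isTGroup_of_lt_card_centralizer heq ha hlt)
  exact ⟨hC, (orderOf_le_card_centralizer a).trans hC⟩

theorem stmt_5 (G : Type*) [Group G] [Finite G] (m n : ℕ) (hm : 2 ≤ m) (hn : 1 ≤ n)
    (h : ¬ IsTGroup G m n)
    (heq : m * n = Nat.card G - Nat.card (Subgroup.center G))
    (a : G) (ha : a ∉ Subgroup.center G) :
    Nat.card (Subgroup.centralizer {a}) ≤ n + Nat.card (Subgroup.center G) ∧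
      orderOf a ≤ n + Nat.card (Subgroup.center G) :=
  stmt_5_general G m n h heq a ha
end

section
/- Let G be a finite T(4,n)-group with n > 1 such that every prime p ≤ n does not divide |G|. Then G is abelian. -/
namespace Commute

variable {G : Type*} [Group G] {a b c : G}

theorem mul_right_iff_of_left (hab : Commute a b) : Commute a (b * c) ↔ Commute a c :=
  ⟨fun h => by simpa using hab.inv_right.mul_right h, hab.mul_right⟩

theorem mul_right_iff_of_right (hac : Commute a c) : Commute a (b * c) ↔ Commute a b :=
  ⟨fun h => by simpa using h.mul_right hac.inv_right, fun h => h.mul_right hac⟩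

theorem of_pow_left_of_coprime {i : ℕ} (hi : i.Coprime (orderOf a)) (h : Commute (a ^ i) c) :
    Commute a c := by
  obtain ⟨m, hm⟩ := exists_pow_eq_self_of_coprime hi
  simpa [hm] using h.pow_left m

end Commute

section

variable {G : Type*} [Group G] {n : ℕ}

theorem coprime_orderOf_of_forall_prime_le (hp : ∀ p : ℕ, p.Prime → p ≤ n → ¬ p ∣ Nat.card G)
    (a : G) (i : ℕ) (hi : 0 < i) (hin : i ≤ n) : i.Coprime (orderOf a) :=
  Nat.coprime_of_dvd fun p hpp hpi hpa =>
    hp p hpp ((Nat.le_of_dvd hi hpi).trans hin) (hpa.trans (orderOf_dvd_natCard a))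

theorem lt_orderOf_of_coprime [Finite G]
    (hcop : ∀ (a : G) (i : ℕ), 0 < i → i ≤ n → i.Coprime (orderOf a)) {a : G} (ha : a ≠ 1) :
    n < orderOf a := by
  by_contra! hle
  have := hcop a _ (orderOf_pos a) hle
  exact ha (orderOf_eq_one_iff.mp ((Nat.coprime_self _).mp this))

variable [DecidableEq G]

def firstPowers (a : G) (n : ℕ) : Finset G := (Finset.Icc 1 n).image (a ^ ·)

/-- Exponents start at `2`: `xy` is already a power of `xy`, and commutes with itself. -/
def twistedPowers (x y : G) (n : ℕ) : Finset G :=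
  insert (x ^ 2 * y) ((Finset.Icc 2 n).image (x * y ^ ·))

def obstruction (x y : G) (n : ℕ) : Fin 4 → Finset G :=
  ![firstPowers x n, firstPowers y n, firstPowers (x * y) n, twistedPowers x y n]

theorem card_firstPowers {a : G} (ha : n < orderOf a) : (firstPowers a n).card = n := by
  rw [firstPowers, Finset.card_image_of_injOn, Nat.card_Icc, Nat.add_sub_cancel]
  intro i hi j hj hij
  simp only [Finset.coe_Icc, Set.mem_Icc] at hi hj
  exact pow_injOn_Iio_orderOf (Set.mem_Iio.2 (by omega)) (Set.mem_Iio.2 (by omega)) hij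

theorem card_twistedPowers (hn : 0 < n) {x y : G} (hxy : ¬Commute x y) (hy : n < orderOf y) :
    (twistedPowers x y n).card = n := by
  rw [twistedPowers, Finset.card_insert_of_notMem, Finset.card_image_of_injOn, Nat.card_Icc]
  · omega
  · intro i hi j hj hij
    simp only [Finset.coe_Icc, Set.mem_Icc] at hi hj
    exact pow_injOn_Iio_orderOf (x := y) (Set.mem_Iio.2 (by omega)) (Set.mem_Iio.2 (by omega))
      (mul_left_cancel hij)
  · simp only [Finset.mem_image, Finset.mem_Icc, not_exists, not_and]
    intro k hk hxk
    have : x = y ^ (k - 1) := by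
      rw [pow_two, mul_assoc, ← pow_sub_mul_pow y (by omega : 1 ≤ k), pow_one] at hxk
      exact mul_right_cancel (mul_left_cancel hxk).symm
    exact hxy (this ▸ (Commute.refl y).pow_left (k - 1))

theorem Commute.of_mem_firstPowers_left {a u c : G}
    (ha : ∀ i, 0 < i → i ≤ n → i.Coprime (orderOf a)) (hu : u ∈ firstPowers a n)
    (h : Commute u c) : Commute a c := by
  obtain ⟨i, hi, rfl⟩ := Finset.mem_image.1 hu
  rw [Finset.mem_Icc] at hi
  exact h.of_pow_left_of_coprime (ha i hi.1 hi.2)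

theorem Commute.of_mem_firstPowers {a b u v : G}
    (ha : ∀ i, 0 < i → i ≤ n → i.Coprime (orderOf a))
    (hb : ∀ i, 0 < i → i ≤ n → i.Coprime (orderOf b))
    (hu : u ∈ firstPowers a n) (hv : v ∈ firstPowers b n) (h : Commute u v) : Commute a b :=
  ((h.of_mem_firstPowers_left ha hu).symm.of_mem_firstPowers_left hb hv).symm

theorem commute_of_commute_mem_twistedPowers {x y a v : G} (hx : Nat.Coprime 2 (orderOf x))
    (hy : ∀ i, 0 < i → i ≤ n → i.Coprime (orderOf y)) (hv : v ∈ twistedPowers x y n)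
    (ha : a = x ∨ a = y ∨ a = x * y) (h : Commute a v) : Commute x y := by
  rcases Finset.mem_insert.1 hv with rfl | hv
  · rcases ha with rfl | rfl | rfl
    · exact (Commute.mul_right_iff_of_left ((Commute.refl a).pow_right 2)).1 h
    · have : Commute a (x ^ 2) := (Commute.mul_right_iff_of_right (Commute.refl a)).1 h
      exact this.symm.of_pow_left_of_coprime hx
    · rw [pow_two, mul_assoc, Commute.mul_right_iff_of_right (Commute.refl _)] at h
      exact (Commute.mul_right_iff_of_left (Commute.refl x)).1 h.symm
  obtain ⟨k, hk, rfl⟩ := Finset.mem_image.1 hv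
  rw [Finset.mem_Icc] at hk
  rcases ha with rfl | rfl | rfl
  · have : Commute a (y ^ k) := (Commute.mul_right_iff_of_left (Commute.refl a)).1 h
    exact (this.symm.of_pow_left_of_coprime (hy k (by omega) hk.2)).symm
  · exact ((Commute.mul_right_iff_of_right ((Commute.refl a).pow_right k)).1 h).symm
  · rw [show k = k - 1 + 1 by omega, pow_succ', ← mul_assoc,
      Commute.mul_right_iff_of_left (Commute.refl _)] at h
    have : Commute y (x * y) := h.symm.of_pow_left_of_coprime (hy (k - 1) (by omega) (by omega))
    exact ((Commute.mul_right_iff_of_right (Commute.refl y)).1 this).symm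

theorem card_obstruction (hn : 0 < n) (hord : ∀ a : G, a ≠ 1 → n < orderOf a) {x y : G}
    (hxy : ¬Commute x y) (i : Fin 4) : (obstruction x y n i).card = n := by
  have hx : x ≠ 1 := by rintro rfl; exact hxy (Commute.one_left y)
  have hy : y ≠ 1 := by rintro rfl; exact hxy (Commute.one_right x)
  have hxy1 : x * y ≠ 1 := fun h1 =>
    hxy (eq_inv_of_mul_eq_one_right h1 ▸ (Commute.refl x).inv_right)
  fin_cases i
  · exact card_firstPowers (hord x hx)
  · exact card_firstPowers (hord y hy)
  · exact card_firstPowers (hord _ hxy1)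
  · exact card_twistedPowers hn hxy (hord y hy)

theorem not_commute_of_mem_obstruction (hn : 2 ≤ n)
    (hcop : ∀ (a : G) (i : ℕ), 0 < i → i ≤ n → i.Coprime (orderOf a)) {x y : G}
    (hxy : ¬Commute x y) {i j : Fin 4} (hij : i ≠ j) {u v : G}
    (hu : u ∈ obstruction x y n i) (hv : v ∈ obstruction x y n j) : ¬Commute u v := by
  wlog hlt : i < j generalizing i j u v
  · exact fun h => this hij.symm hv hu (hij.lt_or_gt.resolve_left hlt) h.symm
  intro h
  have hx2 := hcop x 2 two_pos hn
  fin_cases i <;> fin_cases j <;> (try exact absurd hlt (by decide)) <;>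
    simp only [obstruction, Fin.zero_eta, Fin.mk_one, Fin.reduceFinMk, Matrix.cons_val] at hu hv
  · exact hxy (h.of_mem_firstPowers (hcop x) (hcop y) hu hv)
  · exact hxy ((Commute.mul_right_iff_of_left (Commute.refl x)).1
      (h.of_mem_firstPowers (hcop x) (hcop _) hu hv))
  · exact hxy (commute_of_commute_mem_twistedPowers hx2 (hcop y) hv (.inl rfl)
      (h.of_mem_firstPowers_left (hcop x) hu))
  · exact hxy ((Commute.mul_right_iff_of_right (Commute.refl y)).1
      (h.of_mem_firstPowers (hcop y) (hcop _) hu hv)).symm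
  · exact hxy (commute_of_commute_mem_twistedPowers hx2 (hcop y) hv (.inr (.inl rfl))
      (h.of_mem_firstPowers_left (hcop y) hu))
  · exact hxy (commute_of_commute_mem_twistedPowers hx2 (hcop y) hv (.inr (.inr rfl))
      (h.of_mem_firstPowers_left (hcop _) hu))

end

theorem stmt_15 (G : Type*) [Group G] [Finite G] (n : ℕ) (hn : 1 < n)
    (h : IsTGroup G 4 n)
    (hp : ∀ p : ℕ, p.Prime → p ≤ n → ¬ p ∣ Nat.card G) :
    ∀ a b : G, a * b = b * a := by
  classical
  by_contra! ⟨x, y, hxy⟩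
  have hcop := coprime_orderOf_of_forall_prime_le hp
  have hord : ∀ a : G, a ≠ 1 → n < orderOf a := fun a => lt_orderOf_of_coprime hcop
  obtain ⟨i, j, hij, u, hu, v, hv, huv⟩ :=
    h (obstruction x y n) (card_obstruction (by omega) hord hxy)
  exact not_commute_of_mem_obstruction hn hcop hxy hij hu hv huv
end

section
/- Let G be a non-abelian group and n a positive integer such that every prime p ≤ n does not divide the order of any element of G (i.e., gcd(p,|G|)=1 for finite G). Then G contains a set of n+2 pairwise non-commuting elements, i.e., w(G) ≥ n+2; explicitly, if xy ≠ yx then {x, y, xy, xy², …, xyⁿ} is such a set. -/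
/-!
If `x` and `y` do not commute, then neither do `y` and `x yᵏ`, and a commuting pair
`x yⁱ`, `x yʲ` with `i < j` would make `x` commute with `y ^ (j - i)`. When no prime `p ≤ n`
divides the order of `y`, every exponent `1 ≤ d ≤ n` is coprime to that order, so `y` is a power
of `y ^ d` and `x` would commute with `y`. Hence `y, x, x y, …, x yⁿ` are `n + 2` pairwise
non-commuting elements.
-/

theorem Nat.coprime_of_forall_prime_le_not_dvd {m n k : ℕ} (hm : 0 < m) (hmn : m ≤ n)
    (hk : ∀ p : ℕ, p.Prime → p ≤ n → ¬ p ∣ k) : m.Coprime k :=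
  Nat.coprime_of_dvd fun p hp hpm => hk p hp ((Nat.le_of_dvd hm hpm).trans hmn)

theorem Commute.of_pow_right_of_coprime {M : Type*} [Monoid M] {x y : M} {m : ℕ}
    (h : Commute x (y ^ m)) (hm : m.Coprime (orderOf y)) : Commute x y := by
  obtain ⟨k, hk⟩ := exists_pow_eq_self_of_coprime hm
  exact hk ▸ h.pow_right k

theorem exists_finset_card_eq_pairwise_not_commute {M ι : Type*} [Mul M] [Fintype ι]
    {f : ι → M} (hf : Pairwise fun i j => ¬Commute (f i) (f j)) :
    ∃ X : Finset M, X.card = Fintype.card ι ∧ ∀ a ∈ X, ∀ b ∈ X, a ≠ b → a * b ≠ b * a := by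
  classical
  have hinj : f.Injective := fun i j hij => by
    by_contra hne
    exact hf hne (hij ▸ Commute.refl (f i))
  refine ⟨Finset.univ.image f, by rw [Finset.card_image_of_injective _ hinj, Finset.card_univ], ?_⟩
  simp only [Finset.mem_image, Finset.mem_univ, true_and]
  rintro _ ⟨i, rfl⟩ _ ⟨j, rfl⟩ hne
  exact hf (fun hij => hne (congrArg f hij))

section

variable {G : Type*} [Group G] {x y : G}

theorem not_commute_mul_pow_right (hxy : ¬Commute y x) (k : ℕ) : ¬Commute y (x * y ^ k) :=
  fun h => hxy <| by
    simpa only [mul_inv_cancel_right] using h.mul_right (Commute.self_pow y k).inv_right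

theorem commute_pow_sub_of_commute_mul_pow {i j : ℕ} (hij : i ≤ j)
    (h : Commute (x * y ^ i) (x * y ^ j)) : Commute x (y ^ (j - i)) := by
  obtain ⟨d, rfl⟩ := Nat.exists_eq_add_of_le hij
  rw [pow_add, ← mul_assoc] at h
  have hd : Commute (x * y ^ i) (y ^ d) := by
    simpa only [inv_mul_cancel_left] using (Commute.refl (x * y ^ i)).inv_right.mul_right h
  simpa only [Nat.add_sub_cancel_left, mul_inv_cancel_right] using
    hd.mul_left (Commute.pow_pow_self y i d).inv_left

theorem not_commute_mul_pow_mul_pow {n : ℕ} (hxy : ¬Commute x y)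
    (hy : ∀ p : ℕ, p.Prime → p ≤ n → ¬ p ∣ orderOf y) {i j : ℕ} (hij : i < j) (hjn : j ≤ n) :
    ¬Commute (x * y ^ i) (x * y ^ j) := fun h =>
  hxy <| (commute_pow_sub_of_commute_mul_pow hij.le h).of_pow_right_of_coprime
    (Nat.coprime_of_forall_prime_le_not_dvd (Nat.sub_pos_of_lt hij) (by omega) hy)

theorem pairwise_not_commute_mul_pow {n : ℕ} (hxy : ¬Commute x y)
    (hy : ∀ p : ℕ, p.Prime → p ≤ n → ¬ p ∣ orderOf y) :
    Pairwise fun i j : Option (Fin (n + 1)) =>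
      ¬Commute (i.elim y fun k => x * y ^ (k : ℕ)) (j.elim y fun k => x * y ^ (k : ℕ)) := by
  have hyx : ¬Commute y x := fun h => hxy h.symm
  rintro (_ | i) (_ | j) hne
  · exact absurd rfl hne
  · exact not_commute_mul_pow_right hyx j
  · exact fun h => not_commute_mul_pow_right hyx i h.symm
  · have hij : (i : ℕ) ≠ j := Fin.val_ne_of_ne fun h => hne (congrArg some h)
    rcases hij.lt_or_gt with hlt | hgt
    · exact not_commute_mul_pow_mul_pow hxy hy hlt (Nat.lt_succ_iff.mp j.isLt)
    · exact fun h => not_commute_mul_pow_mul_pow hxy hy hgt (Nat.lt_succ_iff.mp i.isLt) h.symm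

end

theorem stmt_16_general (G : Type*) [Group G] (n : ℕ)
    (hG : ∃ a b : G, a * b ≠ b * a)
    (hp : ∀ p : ℕ, p.Prime → p ≤ n → ∀ g : G, ¬ p ∣ orderOf g) :
    ∃ X : Finset G, X.card = n + 2 ∧
      ∀ x ∈ X, ∀ y ∈ X, x ≠ y → x * y ≠ y * x := by
  obtain ⟨x, y, hxy⟩ := hG
  have hy : ∀ p : ℕ, p.Prime → p ≤ n → ¬ p ∣ orderOf y := fun p hp' hpn => hp p hp' hpn y
  simpa using exists_finset_card_eq_pairwise_not_commute (pairwise_not_commute_mul_pow hxy hy)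

theorem stmt_16 (G : Type*) [Group G] (n : ℕ) (hn : 1 ≤ n)
    (hG : ∃ a b : G, a * b ≠ b * a)
    (hp : ∀ p : ℕ, p.Prime → p ≤ n → ∀ g : G, ¬ p ∣ orderOf g) :
    ∃ X : Finset G, X.card = n + 2 ∧
      ∀ x ∈ X, ∀ y ∈ X, x ≠ y → x * y ≠ y * x :=
  stmt_16_general G n hG hp
end

section
/- If G is a non-abelian finite group and p is the smallest prime divisor of |G|, then w(G) ≥ p + 1. -/
theorem Nat.coprime_of_lt_of_forall_prime_dvd_le {n p k : ℕ}
    (hmin : ∀ q : ℕ, q.Prime → q ∣ n → p ≤ q) (hk0 : 0 < k) (hkp : k < p) : k.Coprime n :=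
  Nat.coprime_of_dvd fun q hq hqk hqn =>
    (hmin q hq hqn).not_gt (lt_of_le_of_lt (Nat.le_of_dvd hk0 hqk) hkp)

section Group

variable {G : Type*} [Group G] {a b c : G}

theorem Commute.of_mul_right (h : Commute a (b * c)) (hc : Commute a c) : Commute a b := by
  simpa using h.mul_right hc.inv_right

theorem Commute.of_pow_right_of_coprime_s17 {k : ℕ} (h : Commute a (b ^ k))
    (hk : k.Coprime (orderOf b)) : Commute a b := by
  obtain ⟨m, hm⟩ := exists_pow_eq_self_of_coprime hk
  exact hm ▸ h.pow_right m

theorem Commute.of_mul_pow_mul_pow {i j : ℕ} (hij : i ≤ j)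
    (h : Commute (a * b ^ i) (a * b ^ j)) : Commute a (b ^ (j - i)) := by
  have hj : a * b ^ j = a * b ^ i * b ^ (j - i) := by
    rw [mul_assoc, ← pow_add, Nat.add_sub_cancel' hij]
  rw [hj] at h
  have hd : Commute (a * b ^ i) (b ^ (j - i)) :=
    (IsLeftRegular.all _).commute_mul_left_iff.mp h.symm
  exact (hd.symm.of_mul_right (Commute.pow_pow_self b (j - i) i)).symm

theorem exists_finset_card_eq_of_pairwise_not_commute {ι : Type*} [Fintype ι] (f : ι → G)
    (hf : Pairwise fun i j => ¬Commute (f i) (f j)) :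
    ∃ X : Finset G, X.card = Fintype.card ι ∧ ∀ x ∈ X, ∀ y ∈ X, x ≠ y → ¬Commute x y := by
  classical
  have hinj : Function.Injective f := fun i j hij => by
    by_contra hne
    exact hf hne (hij ▸ Commute.refl (f i))
  refine ⟨Finset.univ.image f, by rw [Finset.card_image_of_injective _ hinj, Finset.card_univ], ?_⟩
  simp only [Finset.mem_image, Finset.mem_univ, true_and]
  rintro _ ⟨i, rfl⟩ _ ⟨j, rfl⟩ hne
  exact hf (ne_of_apply_ne f hne)

theorem not_commute_self_mul_pow (hab : ¬Commute b a) (k : ℕ) : ¬Commute b (a * b ^ k) :=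
  fun h => hab (h.of_mul_right ((Commute.refl b).pow_right k))

section SmallestPrime

variable {p : ℕ} (hmin : ∀ q : ℕ, q.Prime → q ∣ Nat.card G → p ≤ q)
include hmin

theorem not_commute_pow_of_lt (hab : ¬Commute a b) {k : ℕ} (hk0 : 0 < k) (hkp : k < p) :
    ¬Commute a (b ^ k) := fun h =>
  hab <| h.of_pow_right_of_coprime_s17 <|
    (Nat.coprime_of_lt_of_forall_prime_dvd_le hmin hk0 hkp).coprime_dvd_right
      (orderOf_dvd_natCard b)

theorem pairwise_not_commute_mul_pow_s17 (hab : ¬Commute a b) :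
    Pairwise fun i j : Fin p => ¬Commute (a * b ^ (i : ℕ)) (a * b ^ (j : ℕ)) := by
  have key {i j : Fin p} (hij : i < j) : ¬Commute (a * b ^ (i : ℕ)) (a * b ^ (j : ℕ)) :=
    fun h => not_commute_pow_of_lt hmin hab (Nat.sub_pos_of_lt hij) (by omega)
      (h.of_mul_pow_mul_pow hij.le)
  intro i j hij
  rcases hij.lt_or_gt with h | h
  · exact key h
  · exact fun hc => key h hc.symm

end SmallestPrime

end Group

theorem stmt_17_general (G : Type*) [Group G]
    (hG : ∃ a b : G, a * b ≠ b * a)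
    (p : ℕ)
    (hmin : ∀ q : ℕ, q.Prime → q ∣ Nat.card G → p ≤ q) :
    ∃ X : Finset G, X.card = p + 1 ∧
      ∀ x ∈ X, ∀ y ∈ X, x ≠ y → x * y ≠ y * x := by
  obtain ⟨a, b, hab⟩ := hG
  let f : Option (Fin p) → G := fun i => i.elim b fun i => a * b ^ (i : ℕ)
  have hf : Pairwise fun i j => ¬Commute (f i) (f j) := by
    have hba : ¬Commute b a := fun h => hab h.eq.symm
    rintro (_ | i) (_ | j) hij
    · exact absurd rfl hij
    · exact not_commute_self_mul_pow hba j
    · exact fun h => not_commute_self_mul_pow hba i h.symm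
    · exact pairwise_not_commute_mul_pow_s17 hmin hab fun h => hij (congrArg some h)
  obtain ⟨X, hcard, hX⟩ := exists_finset_card_eq_of_pairwise_not_commute f hf
  exact ⟨X, by simpa using hcard, hX⟩

theorem stmt_17 (G : Type*) [Group G] [Finite G]
    (hG : ∃ a b : G, a * b ≠ b * a)
    (p : ℕ) (hp : p.Prime) (hpd : p ∣ Nat.card G)
    (hmin : ∀ q : ℕ, q.Prime → q ∣ Nat.card G → p ≤ q) :
    ∃ X : Finset G, X.card = p + 1 ∧
      ∀ x ∈ X, ∀ y ∈ X, x ≠ y → x * y ≠ y * x :=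
  stmt_17_general G hG p hmin
end

section
/- Let G be a T(m,n)-group with m ≥ 2, n > 1, and let N be a proper non-trivial normal subgroup of G. Then for every positive integer t with 2t ≤ n, the quotient G/N is a T(m, n−t)-group. -/
open Finset

theorem Finset.exists_card_eq_forall_map_mem_of_two_preimages {α β : Type*} (f : α → β)
    (Y : Finset β) (hY : ∀ y ∈ Y, ∃ a b, a ≠ b ∧ f a = y ∧ f b = y) {k : ℕ}
    (hk : k ≤ 2 * #Y) : ∃ X : Finset α, #X = k ∧ ∀ x ∈ X, f x ∈ Y := by
  choose g₁ g₂ hne hg₁ hg₂ using hY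
  let φ : Y × Bool → α := fun p => cond p.2 (g₁ p.1 p.1.2) (g₂ p.1 p.1.2)
  have hfφ : ∀ p, f (φ p) = p.1 := by
    rintro ⟨y, _ | _⟩ <;> simp [φ, hg₁, hg₂]
  have hφ : Function.Injective φ := by
    rintro ⟨y, b⟩ ⟨y', b'⟩ h
    obtain rfl : y = y' := Subtype.ext <| by simpa [hfφ] using congrArg f h
    cases b <;> cases b' <;> simp_all [φ, (hne _ _).symm]
  obtain ⟨s, -, hs⟩ := exists_subset_card_eq (s := (univ : Finset (Y × Bool)))
    (by simpa [mul_comm] using hk)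
  exact ⟨s.map ⟨φ, hφ⟩, by simp [hs], fun x hx => by
    obtain ⟨p, -, rfl⟩ := mem_map.1 hx
    simp [hfφ]⟩

theorem IsTGroup.of_two_preimages {G H : Type*} [Group G] [Group H] {m n k : ℕ}
    (h : IsTGroup G m n) (f : G →* H) (hf : ∀ y, ∃ a b, a ≠ b ∧ f a = y ∧ f b = y)
    (hnk : n ≤ 2 * k) : IsTGroup H m k := by
  intro Y hY
  choose X hX hXY using fun i =>
    exists_card_eq_forall_map_mem_of_two_preimages f (Y i) (fun y _ => hf y) (hY i ▸ hnk)
  obtain ⟨i, j, hij, x, hx, y, hy, hxy⟩ := h X hX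
  exact ⟨i, j, hij, f x, hXY i x hx, f y, hXY j y hy, by rw [← map_mul, hxy, map_mul]⟩

theorem QuotientGroup.exists_ne_mk_eq {G : Type*} [Group G] {N : Subgroup G} [N.Normal]
    (hN : N ≠ ⊥) (y : G ⧸ N) : ∃ a b : G, a ≠ b ∧ (a : G ⧸ N) = y ∧ (b : G ⧸ N) = y := by
  obtain ⟨c, hcN, hc⟩ := N.bot_or_exists_ne_one.resolve_left hN
  refine ⟨y.out, y.out * c, by simpa using hc, QuotientGroup.out_eq' y, ?_⟩
  rw [QuotientGroup.mk_mul, (QuotientGroup.eq_one_iff c).2 hcN, mul_one, QuotientGroup.out_eq']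

theorem stmt_18_general (G : Type*) [Group G] (m n t : ℕ)
    (h : IsTGroup G m n) (N : Subgroup G) [N.Normal]
    (hbot : N ≠ ⊥) (htn : 2 * t ≤ n) :
    IsTGroup (G ⧸ N) m (n - t) :=
  h.of_two_preimages (QuotientGroup.mk' N) (QuotientGroup.exists_ne_mk_eq hbot) (by omega)

theorem stmt_18 (G : Type*) [Group G] (m n t : ℕ) (hm : 2 ≤ m) (hn : 1 < n)
    (h : IsTGroup G m n) (N : Subgroup G) [N.Normal]
    (hbot : N ≠ ⊥) (htop : N ≠ ⊤) (ht : 1 ≤ t) (htn : 2 * t ≤ n) :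
    IsTGroup (G ⧸ N) m (n - t) :=
  stmt_18_general G m n t h N hbot htn
end
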